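/- arXiv:2603.03894 — 3 statements merged into one kernel-verified Lean document; each statement's English description precedes it below -/
import Mathlib

section
/- Let G=(V,E) be a finite simple graph. Then the map T ↦ { L(t) : t ∈ T, t not a singleton }, where L(t) is the vertex-induced subgraph of the line graph L(G) on the vertex set E(t), is a bijection between the set of tubings of G that contain every singleton {v}, v ∈ V, and the set of GA-tubings of the line graph L(G). -/
set_option linter.unusedSectionVars false
set_option linter.unusedVariables false

open Finset

variable {V : Type} [Fintype V] [DecidableEq V]

/-- A tube of the finite simple graph on vertex type `V` with edge set `E`: a nonempty
connected (not necessarily induced) subgraph, recorded by its vertex and edge sets. -/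
structure Tube (E : Finset (Sym2 V)) where
  verts : Finset V
  edges : Finset (Sym2 V)
  nonempty : verts.Nonempty
  edges_sub : edges ⊆ E
  endpoints_mem : ∀ e ∈ edges, ∀ v ∈ e, v ∈ verts
  conn : ∀ u ∈ verts, ∀ w ∈ verts,
    Relation.ReflTransGen (fun a b => s(a, b) ∈ edges) u w

theorem Tube.ext' {E : Finset (Sym2 V)} {a b : Tube E}
    (h1 : a.verts = b.verts) (h2 : a.edges = b.edges) : a = b := by
  cases a; cases b; subst h1; subst h2; rfl

instance {E : Finset (Sym2 V)} : DecidableEq (Tube E) := fun a b =>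
  decidable_of_iff (a.verts = b.verts ∧ a.edges = b.edges)
    ⟨fun h => Tube.ext' h.1 h.2, fun h => by subst h; exact ⟨rfl, rfl⟩⟩

/-- Tubes are partially ordered by inclusion: `t₁ ⊆ t₂` iff
`V(t₁) ⊆ V(t₂)` and `E(t₁) ⊆ E(t₂)`. -/
instance {E : Finset (Sym2 V)} : PartialOrder (Tube E) where
  le a b := a.verts ⊆ b.verts ∧ a.edges ⊆ b.edges
  le_refl a := ⟨Finset.Subset.refl _, Finset.Subset.refl _⟩
  le_trans a b c h₁ h₂ := ⟨h₁.1.trans h₂.1, h₁.2.trans h₂.2⟩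
  le_antisymm a b h₁ h₂ :=
    Tube.ext' (Finset.Subset.antisymm h₁.1 h₂.1) (Finset.Subset.antisymm h₁.2 h₂.2)

/-- A singleton tube: a single vertex and no edges. -/
def Tube.IsSingleton {E : Finset (Sym2 V)} (t : Tube E) : Prop :=
  ∃ v : V, t.verts = {v} ∧ t.edges = ∅

/-- A tubing: a set of tubes, any two of which are disjoint or nested. -/
def IsTubing (E : Finset (Sym2 V)) (T : Finset (Tube E)) : Prop :=
  ∀ t₁ ∈ T, ∀ t₂ ∈ T,
    Disjoint t₁.verts t₂.verts ∨ t₁.edges ⊆ t₂.edges ∨ t₂.edges ⊆ t₁.edges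

/-- A maximal tubing: a tubing maximal under inclusion. -/
def IsMaxTubing (E : Finset (Sym2 V)) (T : Finset (Tube E)) : Prop :=
  IsTubing E T ∧ ∀ T' : Finset (Tube E), IsTubing E T' → T ⊆ T' → T' = T

/-- The singleton tube on a vertex `v`. -/
def singletonTube (E : Finset (Sym2 V)) (v : V) : Tube E where
  verts := {v}
  edges := ∅
  nonempty := ⟨v, Finset.mem_singleton_self v⟩
  edges_sub := by simp
  endpoints_mem := by simp
  conn := by
    intro u hu w hw
    simp only [Finset.mem_singleton] at hu hw
    subst hu; subst hw
    exact Relation.ReflTransGen.refl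

instance {E : Finset (Sym2 V)} : DecidablePred (Tube.IsSingleton (E := E)) := fun t =>
  decidable_of_iff (∃ v : V, t.verts = {v} ∧ t.edges = ∅) Iff.rfl

/-- `S ⊆ E` is the vertex set of a nonempty connected vertex-induced subgraph of the
line graph `L(G)` of the graph `G = (V, E)`: any two members of `S` are joined by a
path inside `S` whose consecutive members are adjacent in `L(G)`, i.e. distinct edges
of `G` sharing a vertex. -/
def IsLineGraphTube (E : Finset (Sym2 V)) (S : Finset (Sym2 V)) : Prop :=
  S ⊆ E ∧ S.Nonempty ∧ ∀ a ∈ S, ∀ b ∈ S,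
    Relation.ReflTransGen
      (fun x y => x ∈ S ∧ y ∈ S ∧ x ≠ y ∧ ∃ v : V, v ∈ x ∧ v ∈ y) a b

/-- A GA-tubing of the line graph `L(G)`: a collection of (vertex sets of) connected
vertex-induced subgraphs of `L(G)` such that any two members are disjoint or nested,
and any two disjoint members are non-adjacent in `L(G)`. -/
def IsGATubingOfLineGraph (E : Finset (Sym2 V)) (𝒮 : Finset (Finset (Sym2 V))) : Prop :=
  (∀ S ∈ 𝒮, IsLineGraphTube E S) ∧
  ∀ S₁ ∈ 𝒮, ∀ S₂ ∈ 𝒮,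
    (S₁ ∩ S₂ = ∅ ∧ ∀ a ∈ S₁, ∀ b ∈ S₂, a ≠ b → ¬ ∃ v : V, v ∈ a ∧ v ∈ b) ∨
    S₁ ⊆ S₂ ∨ S₂ ⊆ S₁

/-- Any two vertices of a single edge of `S` are connected by the edges of `S`. -/
private lemma same_edge_conn {S : Finset (Sym2 V)} {e : Sym2 V} (he : e ∈ S) {u w : V}
    (hu : u ∈ e) (hw : w ∈ e) :
    Relation.ReflTransGen (fun a b => s(a, b) ∈ S) u w := by
  induction e with
  | _ x y =>
    rw [Sym2.mem_iff] at hu hw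
    rcases hu with rfl | rfl <;> rcases hw with rfl | rfl
    · exact Relation.ReflTransGen.refl
    · exact Relation.ReflTransGen.single he
    · exact Relation.ReflTransGen.single (by rwa [Sym2.eq_swap])
    · exact Relation.ReflTransGen.refl

/-- Graph connectivity via edges in `S` implies line-graph connectivity in `S`. -/
private lemma graph_to_line {S : Finset (Sym2 V)} {x z : V}
    (h : Relation.ReflTransGen (fun a b => s(a, b) ∈ S) x z) :
    ∀ a ∈ S, x ∈ a → ∀ b ∈ S, z ∈ b →
      Relation.ReflTransGen
        (fun p q : Sym2 V => p ∈ S ∧ q ∈ S ∧ p ≠ q ∧ ∃ v : V, v ∈ p ∧ v ∈ q) a b := by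
  induction h with
  | refl =>
    intro a ha hxa b hb hxb
    rcases eq_or_ne a b with rfl | hne
    · exact Relation.ReflTransGen.refl
    · exact Relation.ReflTransGen.single ⟨ha, hb, hne, x, hxa, hxb⟩
  | @tail c z' h' hs ih =>
    intro a ha hxa b hb hzb
    have h1 := ih a ha hxa (s(c, z')) hs (Sym2.mem_mk_left c z')
    refine h1.trans ?_
    rcases eq_or_ne (s(c, z')) b with heq | hne
    · exact heq ▸ Relation.ReflTransGen.refl
    · exact Relation.ReflTransGen.single ⟨hs, hb, hne, z', Sym2.mem_mk_right c z', hzb⟩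

/-- Line-graph connectivity in `S` implies graph connectivity via edges in `S`. -/
private lemma line_to_graph {S : Finset (Sym2 V)} {a b : Sym2 V}
    (h : Relation.ReflTransGen
        (fun p q : Sym2 V => p ∈ S ∧ q ∈ S ∧ p ≠ q ∧ ∃ v : V, v ∈ p ∧ v ∈ q) a b)
    (ha : a ∈ S) :
    ∀ u ∈ a, ∀ w ∈ b, Relation.ReflTransGen (fun p q => s(p, q) ∈ S) u w := by
  induction h with
  | refl => intro u hu w hw; exact same_edge_conn ha hu hw
  | tail h' hs ih =>
    intro u hu w hw
    obtain ⟨hcS, hbS, -, v, hvc, hvb⟩ := hs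
    exact (ih u hu v hvc).trans (same_edge_conn hbS hvb hw)

private lemma edges_nonempty_of_not_singleton {E : Finset (Sym2 V)} {t : Tube E}
    (h : ¬ t.IsSingleton) : t.edges.Nonempty := by
  rw [Finset.nonempty_iff_ne_empty]
  intro he
  obtain ⟨u, hu⟩ := t.nonempty
  apply h
  refine ⟨u, ?_, he⟩
  ext w
  simp only [Finset.mem_singleton]
  constructor
  · intro hw
    have hconn := t.conn w hw u hu
    induction hconn with
    | refl => rfl
    | tail _ hs _ => rw [he] at hs; exact absurd hs (Finset.notMem_empty _)
  · rintro rfl; exact hu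

private lemma mem_verts_iff {E : Finset (Sym2 V)} {t : Tube E} (h : t.edges.Nonempty) {v : V} :
    v ∈ t.verts ↔ ∃ e ∈ t.edges, v ∈ e := by
  constructor
  · intro hv
    obtain ⟨e, he⟩ := h
    have hu : e.out.1 ∈ e := e.out_fst_mem
    have huv : e.out.1 ∈ t.verts := t.endpoints_mem e he _ hu
    rcases (t.conn v hv e.out.1 huv).cases_head with heq | ⟨c, hc, -⟩
    · exact ⟨e, he, by rw [heq]; exact hu⟩
    · exact ⟨s(v, c), hc, Sym2.mem_mk_left v c⟩
  · rintro ⟨e, he, hv⟩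
    exact t.endpoints_mem e he v hv

private lemma tube_eq_of_edges_eq {E : Finset (Sym2 V)} {t₁ t₂ : Tube E}
    (h₁ : ¬ t₁.IsSingleton) (h₂ : ¬ t₂.IsSingleton) (h : t₁.edges = t₂.edges) : t₁ = t₂ := by
  apply Tube.ext' _ h
  ext v
  rw [mem_verts_iff (edges_nonempty_of_not_singleton h₁),
      mem_verts_iff (edges_nonempty_of_not_singleton h₂), h]

private lemma eq_singletonTube {E : Finset (Sym2 V)} {t : Tube E} (h : t.IsSingleton) :
    ∃ v, t = singletonTube E v := by
  obtain ⟨v, h1, h2⟩ := h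
  exact ⟨v, Tube.ext' h1 h2⟩

private lemma singletonTube_isSingleton {E : Finset (Sym2 V)} (v : V) :
    (singletonTube E v).IsSingleton := ⟨v, rfl, rfl⟩

/-- The tube of `G` corresponding to a connected subset `S` of edges. -/
private def tubeOf (E : Finset (Sym2 V)) (S : Finset (Sym2 V)) (hS : IsLineGraphTube E S) :
    Tube E where
  verts := Finset.univ.filter (fun v => ∃ e ∈ S, v ∈ e)
  edges := S
  nonempty := by
    obtain ⟨e, he⟩ := hS.2.1
    exact ⟨e.out.1, by
      simp only [Finset.mem_filter]
      exact ⟨Finset.mem_univ _, e, he, e.out_fst_mem⟩⟩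
  edges_sub := hS.1
  endpoints_mem := by
    intro e he v hv
    simp only [Finset.mem_filter]
    exact ⟨Finset.mem_univ _, e, he, hv⟩
  conn := by
    intro u hu w hw
    simp only [Finset.mem_filter] at hu hw
    obtain ⟨-, a, ha, hua⟩ := hu
    obtain ⟨-, b, hb, hwb⟩ := hw
    exact line_to_graph (hS.2.2 a ha b hb) ha u hua w hwb

private lemma tubeOf_not_singleton {E S : Finset (Sym2 V)} (hS : IsLineGraphTube E S) :
    ¬ (tubeOf E S hS).IsSingleton := by
  rintro ⟨v, -, h⟩
  exact hS.2.1.ne_empty h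

/-- The map `T ↦ { L(t) : t ∈ T, t not a singleton }` (where a
non-singleton tube `t` corresponds to the vertex-induced subgraph of `L(G)` on the
vertex set `E(t)`) is a bijection between the tubings of `G` containing every
singleton and the GA-tubings of the line graph `L(G)`. -/
theorem statement4 (E : Finset (Sym2 V)) (hE : ∀ e ∈ E, ¬ e.IsDiag) :
    Set.BijOn
      (fun T : Finset (Tube E) => (T.filter (fun t => ¬ t.IsSingleton)).image Tube.edges)
      {T : Finset (Tube E) | IsTubing E T ∧ ∀ v : V, singletonTube E v ∈ T}
      {𝒮 : Finset (Finset (Sym2 V)) | IsGATubingOfLineGraph E 𝒮} := by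
  refine ⟨?_, ?_, ?_⟩
  -- MapsTo
  · rintro T ⟨hT, hsing⟩
    simp only [Set.mem_setOf_eq]
    constructor
    · intro S hS
      simp only [Finset.mem_image, Finset.mem_filter] at hS
      obtain ⟨t, ⟨htT, hts⟩, rfl⟩ := hS
      refine ⟨t.edges_sub, edges_nonempty_of_not_singleton hts, ?_⟩
      intro a ha b hb
      exact graph_to_line
        (t.conn _ (t.endpoints_mem a ha _ a.out_fst_mem)
          _ (t.endpoints_mem b hb _ b.out_fst_mem))
        a ha a.out_fst_mem b hb b.out_fst_mem
    · intro S₁ hS₁ S₂ hS₂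
      simp only [Finset.mem_image, Finset.mem_filter] at hS₁ hS₂
      obtain ⟨t₁, ⟨ht₁, -⟩, rfl⟩ := hS₁
      obtain ⟨t₂, ⟨ht₂, -⟩, rfl⟩ := hS₂
      rcases hT t₁ ht₁ t₂ ht₂ with hd | hn | hn
      · left
        constructor
        · ext e
          simp only [Finset.mem_inter, Finset.notMem_empty, iff_false, not_and]
          intro he₁ he₂
          exact (Finset.disjoint_left.mp hd (t₁.endpoints_mem e he₁ _ e.out_fst_mem))
            (t₂.endpoints_mem e he₂ _ e.out_fst_mem)
        · rintro a ha b hb - ⟨v, hva, hvb⟩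
          exact (Finset.disjoint_left.mp hd (t₁.endpoints_mem a ha v hva))
            (t₂.endpoints_mem b hb v hvb)
      · exact Or.inr (Or.inl hn)
      · exact Or.inr (Or.inr hn)
  -- InjOn
  · rintro T₁ ⟨hT₁, hs₁⟩ T₂ ⟨hT₂, hs₂⟩ h
    simp only at h
    have key : ∀ (A B : Finset (Tube E)), (∀ v, singletonTube E v ∈ B) →
        (A.filter (fun t => ¬ t.IsSingleton)).image Tube.edges =
          (B.filter (fun t => ¬ t.IsSingleton)).image Tube.edges →
        ∀ t ∈ A, t ∈ B := by
      intro A B hB hAB t ht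
      by_cases hsg : t.IsSingleton
      · obtain ⟨v, rfl⟩ := eq_singletonTube hsg
        exact hB v
      · have hmem : t.edges ∈ (B.filter (fun t => ¬ t.IsSingleton)).image Tube.edges := by
          rw [← hAB]
          exact Finset.mem_image_of_mem _ (Finset.mem_filter.mpr ⟨ht, hsg⟩)
        obtain ⟨t', ht', he⟩ := Finset.mem_image.mp hmem
        obtain ⟨ht'B, ht's⟩ := Finset.mem_filter.mp ht'
        rw [tube_eq_of_edges_eq hsg ht's he.symm]
        exact ht'B
    exact Finset.Subset.antisymm (fun t ht => key T₁ T₂ hs₂ h t ht)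
      (fun t ht => key T₂ T₁ hs₁ h.symm t ht)
  -- SurjOn
  · rintro 𝒮 h𝒮
    simp only [Set.mem_setOf_eq] at h𝒮
    obtain ⟨hmem, hpair⟩ := h𝒮
    classical
    set T : Finset (Tube E) :=
      (Finset.univ.image (singletonTube E)) ∪
        (𝒮.attach.image (fun S => tubeOf E S.1 (hmem S.1 S.2))) with hTdef
    have hcase : ∀ t ∈ T, (∃ v, t = singletonTube E v) ∨
        ∃ (S : Finset (Sym2 V)) (hS : S ∈ 𝒮), t = tubeOf E S (hmem S hS) := by
      intro t ht
      rw [hTdef, Finset.mem_union] at ht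
      rcases ht with ht | ht
      · obtain ⟨v, -, rfl⟩ := Finset.mem_image.mp ht
        exact Or.inl ⟨v, rfl⟩
      · obtain ⟨⟨S, hS⟩, -, rfl⟩ := Finset.mem_image.mp ht
        exact Or.inr ⟨S, hS, rfl⟩
    refine ⟨T, ⟨?_, ?_⟩, ?_⟩
    · -- tubing
      intro t₁ ht₁ t₂ ht₂
      rcases hcase t₁ ht₁ with ⟨v, rfl⟩ | ⟨S₁, hS₁, rfl⟩
      · exact Or.inr (Or.inl (by simp [singletonTube]))
      rcases hcase t₂ ht₂ with ⟨v, rfl⟩ | ⟨S₂, hS₂, rfl⟩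
      · exact Or.inr (Or.inr (by simp [singletonTube]))
      rcases hpair S₁ hS₁ S₂ hS₂ with ⟨hint, hadj⟩ | hn | hn
      · left
        rw [Finset.disjoint_left]
        intro v hv₁ hv₂
        simp only [tubeOf, Finset.mem_filter] at hv₁ hv₂
        obtain ⟨-, a, ha, hva⟩ := hv₁
        obtain ⟨-, b, hb, hvb⟩ := hv₂
        have hne : a ≠ b := by
          rintro rfl
          have : a ∈ S₁ ∩ S₂ := Finset.mem_inter.mpr ⟨ha, hb⟩
          rw [hint] at this
          exact Finset.notMem_empty _ this
        exact hadj a ha b hb hne ⟨v, hva, hvb⟩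
      · exact Or.inr (Or.inl hn)
      · exact Or.inr (Or.inr hn)
    · -- contains all singletons
      intro v
      rw [hTdef, Finset.mem_union]
      exact Or.inl (Finset.mem_image_of_mem _ (Finset.mem_univ v))
    · -- image is 𝒮
      simp only
      have hfil : T.filter (fun t => ¬ t.IsSingleton) =
          𝒮.attach.image (fun S => tubeOf E S.1 (hmem S.1 S.2)) := by
        ext t
        simp only [Finset.mem_filter, hTdef, Finset.mem_union]
        constructor
        · rintro ⟨h1 | h2, hns⟩
          · obtain ⟨v, -, rfl⟩ := Finset.mem_image.mp h1
            exact absurd (singletonTube_isSingleton v) hns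
          · exact h2
        · intro h2
          refine ⟨Or.inr h2, ?_⟩
          obtain ⟨⟨S, hS⟩, -, rfl⟩ := Finset.mem_image.mp h2
          exact tubeOf_not_singleton _
      rw [hfil, Finset.image_image]
      exact Finset.attach_image_val
end

section
/- Let G be a finite simple graph, T a maximal tubing of G, and t ∈ T a tube that is not a singleton. Then the set of inclusion-maximal elements of { s ∈ T : s ⊊ t } has cardinality one or two. If it equals {s₁}, then V(t) = V(s₁) and E(t) = E(s₁) ∪ {e} for a single edge e. If it equals {s₁, s₂}, then s₁ and s₂ are disjoint and t is the union of s₁ and s₂ together with a single edge e joining a vertex of s₁ to a vertex of s₂, i.e. V(t) = V(s₁) ∪ V(s₂) and E(t) = E(s₁) ∪ E(s₂) ∪ {e}. -/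
set_option linter.unusedSectionVars false
set_option linter.unusedVariables false

open Finset

variable {V : Type} [Fintype V] [DecidableEq V]

/-!
Every vertex of `t` lies in a maximal proper subtube of `t` in `T` (one above its singleton tube,
which a maximal tubing must contain), and two such maximal subtubes that meet are equal. Since `t`
is connected, some edge `s(a, b)` of `t` lies in none of them. Gluing the maximal subtubes through
`a` and `b` along this edge gives a tube compatible with every tube of `T`, so it belongs to `T`.
It is not a proper subtube of `t`, for then it would lie in a maximal one, which would contain
`s(a, b)`; hence it is `t`.
-/

namespace Tube

variable {E : Finset (Sym2 V)}

theorem forall_mem_verts_of_edge_closed (t : Tube E) {P : V → Prop} {p : V} (hp : p ∈ t.verts)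
    (hPp : P p) (hP : ∀ b c, s(b, c) ∈ t.edges → P b → P c) : ∀ w ∈ t.verts, P w := by
  intro w hw
  have hpw := t.conn p hp w hw
  clear hw
  induction hpw with
  | refl => exact hPp
  | tail _ hbc ih => exact hP _ _ hbc ih

theorem isSingleton_of_edges_eq_empty (s : Tube E) (h : s.edges = ∅) : s.IsSingleton := by
  obtain ⟨v, hv⟩ := s.nonempty
  refine ⟨v, Finset.eq_singleton_iff_unique_mem.2 ⟨hv, fun w hw => ?_⟩, h⟩
  exact (s.forall_mem_verts_of_edge_closed hv rfl (fun b c hbc => by simp [h] at hbc) w hw).symm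

theorem exists_mem_edges_of_mem_verts (s : Tube E) (hne : s.edges.Nonempty) {v : V}
    (hv : v ∈ s.verts) : ∃ e ∈ s.edges, v ∈ e := by
  obtain ⟨e₀, he₀⟩ := hne
  induction e₀ using Sym2.ind with
  | _ p q =>
    rcases (s.conn v hv p (s.endpoints_mem _ he₀ p (Sym2.mem_mk_left p q))).cases_head with
      rfl | ⟨c, hc, _⟩
    · exact ⟨_, he₀, Sym2.mem_mk_left v q⟩
    · exact ⟨_, hc, Sym2.mem_mk_left v c⟩

theorem le_of_edges_subset {s u : Tube E} (h : s.edges ⊆ u.edges)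
    (hsu : ¬ Disjoint s.verts u.verts) : s ≤ u := by
  refine ⟨fun v hv => ?_, h⟩
  rcases Finset.eq_empty_or_nonempty s.edges with he | he
  · obtain ⟨w, hw, -⟩ := s.isSingleton_of_edges_eq_empty he
    obtain ⟨x, hx, hxu⟩ := Finset.not_disjoint_iff.1 hsu
    rw [hw, Finset.mem_singleton] at hv hx
    exact hv ▸ hx ▸ hxu
  · obtain ⟨e, he, hve⟩ := s.exists_mem_edges_of_mem_verts he hv
    exact u.endpoints_mem e (h he) v hve

variable (E) in
def single (v : V) : Tube E where
  verts := {v}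
  edges := ∅
  nonempty := Finset.singleton_nonempty v
  edges_sub := Finset.empty_subset _
  endpoints_mem := by simp
  conn := by
    intro u hu w hw
    rw [Finset.mem_singleton] at hu hw
    exact hu ▸ hw ▸ Relation.ReflTransGen.refl

/-- For `s₁ = s₂` this is `s₁` with the edge `s(a, b)` added. -/
def glue (s₁ s₂ : Tube E) {a b : V} (ha : a ∈ s₁.verts) (hb : b ∈ s₂.verts)
    (hab : s(a, b) ∈ E) : Tube E where
  verts := s₁.verts ∪ s₂.verts
  edges := insert s(a, b) (s₁.edges ∪ s₂.edges)
  nonempty := s₁.nonempty.mono Finset.subset_union_left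
  edges_sub := Finset.insert_subset hab (Finset.union_subset s₁.edges_sub s₂.edges_sub)
  endpoints_mem := by
    intro x hx v hv
    rcases Finset.mem_insert.1 hx with rfl | hx
    · rcases Sym2.mem_iff.1 hv with rfl | rfl
      · exact Finset.mem_union_left _ ha
      · exact Finset.mem_union_right _ hb
    · rcases Finset.mem_union.1 hx with hx | hx
      · exact Finset.mem_union_left _ (s₁.endpoints_mem x hx v hv)
      · exact Finset.mem_union_right _ (s₂.endpoints_mem x hx v hv)
  conn := by
    set R := fun p q => s(p, q) ∈ insert s(a, b) (s₁.edges ∪ s₂.edges)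
    have conn₁ {x y : V} (hx : x ∈ s₁.verts) (hy : y ∈ s₁.verts) : Relation.ReflTransGen R x y :=
      Relation.ReflTransGen.mono (fun p q hpq =>
        Finset.mem_insert_of_mem (Finset.mem_union_left _ hpq)) _ _ (s₁.conn x hx y hy)
    have conn₂ {x y : V} (hx : x ∈ s₂.verts) (hy : y ∈ s₂.verts) : Relation.ReflTransGen R x y :=
      Relation.ReflTransGen.mono (fun p q hpq =>
        Finset.mem_insert_of_mem (Finset.mem_union_right _ hpq)) _ _ (s₂.conn x hx y hy)
    have hab : R a b := Finset.mem_insert_self _ _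
    have hba : R b a := by simpa only [R, Sym2.eq_swap] using hab
    intro u hu w hw
    rcases Finset.mem_union.1 hu with hu | hu <;> rcases Finset.mem_union.1 hw with hw | hw
    · exact conn₁ hu hw
    · exact ((conn₁ hu ha).tail hab).trans (conn₂ hb hw)
    · exact ((conn₂ hu hb).tail hba).trans (conn₁ ha hw)
    · exact conn₂ hu hw

theorem left_le_glue (s₁ s₂ : Tube E) {a b : V} (ha : a ∈ s₁.verts) (hb : b ∈ s₂.verts)
    (hab : s(a, b) ∈ E) : s₁ ≤ glue s₁ s₂ ha hb hab :=
  ⟨Finset.subset_union_left, Finset.subset_union_left.trans (Finset.subset_insert _ _)⟩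

theorem right_le_glue (s₁ s₂ : Tube E) {a b : V} (ha : a ∈ s₁.verts) (hb : b ∈ s₂.verts)
    (hab : s(a, b) ∈ E) : s₂ ≤ glue s₁ s₂ ha hb hab :=
  ⟨Finset.subset_union_right, Finset.subset_union_right.trans (Finset.subset_insert _ _)⟩

end Tube

section Tubing

variable {E : Finset (Sym2 V)} {T : Finset (Tube E)}

theorem IsTubing.le_or_le_of_not_disjoint (hT : IsTubing E T) {s u : Tube E} (hs : s ∈ T)
    (hu : u ∈ T) (hsu : ¬ Disjoint s.verts u.verts) : s ≤ u ∨ u ≤ s := by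
  rcases hT s hs u hu with h | h | h
  · exact absurd h hsu
  · exact Or.inl (Tube.le_of_edges_subset h hsu)
  · exact Or.inr (Tube.le_of_edges_subset h (disjoint_comm.not.1 hsu))

theorem IsMaxTubing.mem_of_compatible (hT : IsMaxTubing E T) {u : Tube E}
    (hu : ∀ s ∈ T, Disjoint u.verts s.verts ∨ u ≤ s ∨ s ≤ u) : u ∈ T := by
  have hu' : ∀ s ∈ T, Disjoint u.verts s.verts ∨ u.edges ⊆ s.edges ∨ s.edges ⊆ u.edges :=
    fun s hs => (hu s hs).imp_right (Or.imp And.right And.right)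
  have htubing : IsTubing E (insert u T) := by
    intro t₁ h₁ t₂ h₂
    rcases Finset.mem_insert.1 h₁ with rfl | h₁T <;> rcases Finset.mem_insert.1 h₂ with rfl | h₂T
    · exact Or.inr (Or.inl subset_rfl)
    · exact hu' t₂ h₂T
    · exact (hu' t₁ h₁T).imp disjoint_comm.1 Or.symm
    · exact hT.1 t₁ h₁T t₂ h₂T
  exact hT.2 _ htubing (Finset.subset_insert _ _) ▸ Finset.mem_insert_self u T

theorem IsMaxTubing.single_mem (hT : IsMaxTubing E T) (v : V) : Tube.single E v ∈ T := by
  refine hT.mem_of_compatible fun s _ => ?_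
  by_cases hv : v ∈ s.verts
  · exact Or.inr (Or.inl ⟨Finset.singleton_subset_iff.2 hv, Finset.empty_subset _⟩)
  · exact Or.inl (Finset.disjoint_singleton_left.2 hv)

end Tubing

abbrev IsMaxSubtube {E : Finset (Sym2 V)} (T : Finset (Tube E)) (t s : Tube E) : Prop :=
  Maximal (fun s => s ∈ T ∧ s < t) s

namespace IsMaxSubtube

variable {E : Finset (Sym2 V)} {T : Finset (Tube E)} {t : Tube E}

theorem exists_ge {s : Tube E} (hs : s ∈ T) (hst : s < t) : ∃ m, IsMaxSubtube T t m ∧ s ≤ m :=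
  have hfin : {s | s ∈ T ∧ s < t}.Finite := T.finite_toSet.subset fun _ h => h.1
  (hfin.exists_le_maximal ⟨hs, hst⟩).imp fun _ h => h.symm

theorem eq_of_not_disjoint (hT : IsTubing E T) {m₁ m₂ : Tube E} (h₁ : IsMaxSubtube T t m₁)
    (h₂ : IsMaxSubtube T t m₂) (h : ¬ Disjoint m₁.verts m₂.verts) : m₁ = m₂ := by
  rcases hT.le_or_le_of_not_disjoint h₁.1.1 h₂.1.1 h with h | h
  · exact h₁.eq_of_le h₂.1 h
  · exact (h₂.eq_of_le h₁.1 h).symm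

theorem exists_mem_verts (hT : IsMaxTubing E T) (hsing : ¬ t.IsSingleton) {v : V}
    (hv : v ∈ t.verts) : ∃ m, IsMaxSubtube T t m ∧ v ∈ m.verts := by
  have hlt : Tube.single E v < t := by
    refine lt_of_le_of_ne ⟨Finset.singleton_subset_iff.2 hv, Finset.empty_subset _⟩ ?_
    rintro rfl
    exact hsing ⟨v, rfl, rfl⟩
  obtain ⟨m, hm, hvm⟩ := exists_ge (hT.single_mem v) hlt
  exact ⟨m, hm, hvm.1 (Finset.mem_singleton_self v)⟩

theorem le_or_ge (hT : IsTubing E T) (ht : t ∈ T) {m s : Tube E} (hm : IsMaxSubtube T t m)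
    (hs : s ∈ T) (hsm : ¬ Disjoint s.verts m.verts) : s ≤ m ∨ t ≤ s := by
  rcases hT.le_or_le_of_not_disjoint hs hm.1.1 hsm with hsm | hms
  · exact Or.inl hsm
  obtain ⟨x, hx⟩ := m.nonempty
  have hst : ¬ Disjoint s.verts t.verts :=
    Finset.not_disjoint_iff.2 ⟨x, hms.1 hx, hm.1.2.le.1 hx⟩
  rcases hT.le_or_le_of_not_disjoint hs ht hst with hst | hts
  · rcases hst.lt_or_eq with hst | rfl
    · exact Or.inl (hm.2 ⟨hs, hst⟩ hms)
    · exact Or.inr le_rfl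
  · exact Or.inr hts

theorem exists_edge_forall_not_mem (hT : IsTubing E T) (hsing : ¬ t.IsSingleton) :
    ∃ e ∈ t.edges, ∀ m, IsMaxSubtube T t m → e ∉ m.edges := by
  by_contra! hcov
  obtain ⟨e₀, he₀⟩ := Finset.nonempty_iff_ne_empty.2 (mt t.isSingleton_of_edges_eq_empty hsing)
  obtain ⟨m₀, hm₀, he₀m₀⟩ := hcov e₀ he₀
  have hcov₀ : ∀ e ∈ t.edges, ∀ v ∈ e, v ∈ m₀.verts → e ∈ m₀.edges := by
    intro e he v hve hv
    obtain ⟨m, hm, hem⟩ := hcov e he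
    have hmm₀ : ¬ Disjoint m.verts m₀.verts :=
      Finset.not_disjoint_iff.2 ⟨v, m.endpoints_mem e hem v hve, hv⟩
    exact hm.eq_of_not_disjoint hT hm₀ hmm₀ ▸ hem
  have hverts : t.verts ⊆ m₀.verts := by
    refine t.forall_mem_verts_of_edge_closed (t.endpoints_mem _ he₀ _ (Sym2.out_fst_mem e₀))
      (m₀.endpoints_mem _ he₀m₀ _ (Sym2.out_fst_mem e₀)) fun b c hbc hb => ?_
    exact m₀.endpoints_mem _ (hcov₀ _ hbc b (Sym2.mem_mk_left b c) hb) c (Sym2.mem_mk_right b c)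
  have hedges : t.edges ⊆ m₀.edges := fun e he =>
    hcov₀ e he _ (Sym2.out_fst_mem e) (hverts (t.endpoints_mem e he _ (Sym2.out_fst_mem e)))
  exact hm₀.1.2.not_ge ⟨hverts, hedges⟩

theorem eq_glue (hT : IsMaxTubing E T) (ht : t ∈ T) {ma mb : Tube E} (hma : IsMaxSubtube T t ma)
    (hmb : IsMaxSubtube T t mb) {a b : V} (ha : a ∈ ma.verts) (hb : b ∈ mb.verts)
    (hab : s(a, b) ∈ E) (he : s(a, b) ∈ t.edges)
    (hout : ∀ m, IsMaxSubtube T t m → s(a, b) ∉ m.edges) : t = Tube.glue ma mb ha hb hab := by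
  set g := Tube.glue ma mb ha hb hab
  have hgt : g ≤ t := ⟨Finset.union_subset hma.1.2.le.1 hmb.1.2.le.1,
    Finset.insert_subset he (Finset.union_subset hma.1.2.le.2 hmb.1.2.le.2)⟩
  have hgT : g ∈ T := by
    refine hT.mem_of_compatible fun s hs => ?_
    by_cases hgs : Disjoint g.verts s.verts
    · exact Or.inl hgs
    obtain ⟨x, hxg, hxs⟩ := Finset.not_disjoint_iff.1 hgs
    have hs_le : s ≤ g ∨ t ≤ s := by
      rcases Finset.mem_union.1 hxg with hx | hx
      · exact (hma.le_or_ge hT.1 ht hs (Finset.not_disjoint_iff.2 ⟨x, hxs, hx⟩)).imp_left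
          fun h => h.trans (Tube.left_le_glue ..)
      · exact (hmb.le_or_ge hT.1 ht hs (Finset.not_disjoint_iff.2 ⟨x, hxs, hx⟩)).imp_left
          fun h => h.trans (Tube.right_le_glue ..)
    exact Or.inr (hs_le.symm.imp hgt.trans id)
  refine (hgt.lt_or_eq.resolve_left fun hlt => hout ma hma ?_).symm
  exact (hma.2 ⟨hgT, hlt⟩ (Tube.left_le_glue ..)).2 (Finset.mem_insert_self _ _)

theorem setOf_eq_pair (hT : IsTubing E T) {ma mb : Tube E} (hma : IsMaxSubtube T t ma)
    (hmb : IsMaxSubtube T t mb) (hcover : t.verts ⊆ ma.verts ∪ mb.verts) :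
    {s | IsMaxSubtube T t s} = {ma, mb} := by
  ext s
  refine ⟨fun hs => ?_, by rintro (rfl | rfl) <;> assumption⟩
  obtain ⟨x, hx⟩ := s.nonempty
  rcases Finset.mem_union.1 (hcover (hs.1.2.le.1 hx)) with h | h
  · exact Or.inl (hs.eq_of_not_disjoint hT hma (Finset.not_disjoint_iff.2 ⟨x, hx, h⟩))
  · exact Or.inr (hs.eq_of_not_disjoint hT hmb (Finset.not_disjoint_iff.2 ⟨x, hx, h⟩))

end IsMaxSubtube

theorem statement6_general (E : Finset (Sym2 V))
    (T : Finset (Tube E)) (hT : IsMaxTubing E T)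
    (t : Tube E) (ht : t ∈ T) (hsing : ¬ t.IsSingleton) :
    (∃ s₁ : Tube E, {s : Tube E | Maximal (fun s => s ∈ T ∧ s < t) s} = {s₁} ∧
        t.verts = s₁.verts ∧
        ∃ e : Sym2 V, e ∉ s₁.edges ∧ t.edges = insert e s₁.edges) ∨
    (∃ s₁ s₂ : Tube E, s₁ ≠ s₂ ∧
        {s : Tube E | Maximal (fun s => s ∈ T ∧ s < t) s} = {s₁, s₂} ∧
        Disjoint s₁.verts s₂.verts ∧
        ∃ a b : V, a ∈ s₁.verts ∧ b ∈ s₂.verts ∧ s(a, b) ∉ s₁.edges ∪ s₂.edges ∧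
          t.verts = s₁.verts ∪ s₂.verts ∧
          t.edges = insert s(a, b) (s₁.edges ∪ s₂.edges)) := by
  obtain ⟨e, he, hout⟩ := IsMaxSubtube.exists_edge_forall_not_mem hT.1 hsing
  induction e using Sym2.ind with | _ a b => ?_
  obtain ⟨ma, hma, ha⟩ :=
    IsMaxSubtube.exists_mem_verts hT hsing (t.endpoints_mem _ he a (Sym2.mem_mk_left a b))
  obtain ⟨mb, hmb, hb⟩ :=
    IsMaxSubtube.exists_mem_verts hT hsing (t.endpoints_mem _ he b (Sym2.mem_mk_right a b))
  have hglue := IsMaxSubtube.eq_glue hT ht hma hmb ha hb (t.edges_sub he) he hout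
  have hverts : t.verts = ma.verts ∪ mb.verts := congrArg Tube.verts hglue
  have hedges : t.edges = insert s(a, b) (ma.edges ∪ mb.edges) := congrArg Tube.edges hglue
  have hmax := IsMaxSubtube.setOf_eq_pair hT.1 hma hmb hverts.subset
  by_cases hm : ma = mb
  · subst hm
    rw [Finset.union_self] at hverts hedges
    exact Or.inl ⟨ma, hmax.trans (Set.pair_eq_singleton ma), hverts, _, hout ma hma, hedges⟩
  · have hdisj : Disjoint ma.verts mb.verts := by
      by_contra h
      exact hm (hma.eq_of_not_disjoint hT.1 hmb h)
    have hab : s(a, b) ∉ ma.edges ∪ mb.edges := by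
      simp only [Finset.mem_union, not_or]
      exact ⟨hout ma hma, hout mb hmb⟩
    exact Or.inr ⟨ma, mb, hm, hmax, hdisj, a, b, ha, hb, hab, hverts, hedges⟩

/-- Let `G` be a finite simple graph, `T` a maximal tubing and `t ∈ T`
not a singleton. Then the set of inclusion-maximal elements of `{ s ∈ T : s ⊊ t }` has
one or two elements. In the first case `{s₁}`, `V(t) = V(s₁)` and `E(t) = E(s₁) ∪ {e}`
for a single edge `e`; in the second case `{s₁, s₂}`, the tubes `s₁, s₂` are disjoint
and `t` is their union together with a single edge joining a vertex of `s₁` to a vertex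
of `s₂`. -/
theorem statement6 (E : Finset (Sym2 V)) (hE : ∀ e ∈ E, ¬ e.IsDiag)
    (T : Finset (Tube E)) (hT : IsMaxTubing E T)
    (t : Tube E) (ht : t ∈ T) (hsing : ¬ t.IsSingleton) :
    (∃ s₁ : Tube E, {s : Tube E | Maximal (fun s => s ∈ T ∧ s < t) s} = {s₁} ∧
        t.verts = s₁.verts ∧
        ∃ e : Sym2 V, e ∉ s₁.edges ∧ t.edges = insert e s₁.edges) ∨
    (∃ s₁ s₂ : Tube E, s₁ ≠ s₂ ∧
        {s : Tube E | Maximal (fun s => s ∈ T ∧ s < t) s} = {s₁, s₂} ∧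
        Disjoint s₁.verts s₂.verts ∧
        ∃ a b : V, a ∈ s₁.verts ∧ b ∈ s₂.verts ∧ s(a, b) ∉ s₁.edges ∪ s₂.edges ∧
          t.verts = s₁.verts ∪ s₂.verts ∧
          t.edges = insert s(a, b) (s₁.edges ∪ s₂.edges)) :=
  statement6_general E T hT t ht hsing
end

section
/- Let G be a finite simple graph, T a maximal tubing of G, and t ∈ T a tube that is not a singleton. Then there exists a unique edge e ∈ E(t) such that for every τ ∈ T one has e ∈ E(τ) if and only if t ⊆ τ (we say t introduces e). -/
set_option linter.unusedSectionVars false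
set_option linter.unusedVariables false

open Finset

variable {V : Type} [Fintype V] [DecidableEq V]

/-!
Existence holds in every tubing. Otherwise each edge of `t` lies in a tube of `T` whose edge set
is strictly inside that of `t`; among these pick `c` with the most edges. Connectivity of `t`
yields an edge of `t` outside `c` with an endpoint in `c`. The tube of `T` below `t` carrying
that edge meets `c`, so it is nested with `c`: it can neither contain `c` (maximality of `c`)
nor lie inside it (the edge is not in `c`).

Uniqueness uses maximality of `T`. If `t` introduced two edges `e₁ ≠ e₂`, let `c` be the
component of an endpoint of `e₂` in `t` with `e₁` deleted. A tube of `T` below `t` avoiding `e₁`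
is connected inside `t - e₁`, so it lies in `c` or is disjoint from it; hence `c` is compatible
with all of `T` and belongs to `T`. But `c` contains `e₂` and not `e₁`.
-/

theorem Relation.ReflTransGen.exists_boundary_rel {α : Type*} {r : α → α → Prop} {p : α → Prop}
    {a b : α} (h : Relation.ReflTransGen r a b) (ha : p a) (hb : ¬ p b) :
    ∃ x, p x ∧ ∃ y, ¬ p y ∧ r x y := by
  induction h with
  | refl => exact absurd ha hb
  | @tail y z _ hyz ih =>
    by_cases hy : p y
    · exact ⟨y, hy, z, hb, hyz⟩
    · exact ih hy

section

variable {V : Type} {E : Finset (Sym2 V)}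

theorem Tube.edges_nonempty_of_not_isSingleton {t : Tube E} (h : ¬ t.IsSingleton) :
    t.edges.Nonempty := by
  rw [Finset.nonempty_iff_ne_empty]
  intro he
  obtain ⟨v, hv⟩ := t.nonempty
  refine h ⟨v, Finset.eq_singleton_iff_unique_mem.2 ⟨hv, fun w hw => ?_⟩, he⟩
  rcases (t.conn w hw v hv).cases_head with hwv | ⟨c, hc, -⟩
  · exact hwv
  · simp [he] at hc

theorem Tube.exists_mem_edges_of_mem_verts_s7 {t : Tube E} (hne : t.edges.Nonempty) {v : V}
    (hv : v ∈ t.verts) : ∃ e ∈ t.edges, v ∈ e := by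
  obtain ⟨e, he⟩ := hne
  obtain ⟨x, hx⟩ : ∃ x, x ∈ e := ⟨_, e.out_fst_mem⟩
  rcases (t.conn v hv x (t.endpoints_mem e he x hx)).cases_head with rfl | ⟨c, hc, -⟩
  · exact ⟨e, he, hx⟩
  · exact ⟨s(v, c), hc, Sym2.mem_mk_left v c⟩

theorem Tube.verts_subset_of_edges_subset {a b : Tube E} (hne : a.edges.Nonempty)
    (h : a.edges ⊆ b.edges) : a.verts ⊆ b.verts := fun v hv => by
  obtain ⟨e, he, hve⟩ := a.exists_mem_edges_of_mem_verts_s7 hne hv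
  exact b.endpoints_mem e (h he) v hve

theorem Tube.exists_boundary_edge {c t : Tube E} (hv : c.verts ⊆ t.verts)
    (he : c.edges ⊂ t.edges) : ∃ e ∈ t.edges, e ∉ c.edges ∧ ∃ x ∈ e, x ∈ c.verts := by
  obtain ⟨e, het, hec⟩ := Finset.exists_of_ssubset he
  obtain ⟨x, hx⟩ : ∃ x, x ∈ e := ⟨_, e.out_fst_mem⟩
  by_cases hxc : x ∈ c.verts
  · exact ⟨e, het, hec, x, hx, hxc⟩
  obtain ⟨u, hu⟩ := c.nonempty
  obtain ⟨a, ha, b, hb, hab⟩ :=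
    (t.conn u (hv hu) x (t.endpoints_mem e het x hx)).exists_boundary_rel (p := (· ∈ c.verts)) hu hxc
  exact ⟨s(a, b), hab, fun h => hb (c.endpoints_mem _ h b (Sym2.mem_mk_right a b)),
    a, Sym2.mem_mk_left a b, ha⟩

theorem Tube.mem_verts_of_reflTransGen (t : Tube E) {F : Finset (Sym2 V)} (hF : F ⊆ t.edges)
    {u w : V} (hu : u ∈ t.verts) (h : Relation.ReflTransGen (fun a b => s(a, b) ∈ F) u w) :
    w ∈ t.verts := by
  rcases h.cases_tail with rfl | ⟨c, -, hc⟩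
  · exact hu
  · exact t.endpoints_mem _ (hF hc) w (Sym2.mem_mk_right c w)

theorem reflTransGen_mem_sym2_symm {F : Finset (Sym2 V)} {u w : V}
    (h : Relation.ReflTransGen (fun a b => s(a, b) ∈ F) u w) :
    Relation.ReflTransGen (fun a b => s(a, b) ∈ F) w u :=
  have : Std.Symm (fun a b : V => s(a, b) ∈ F) := ⟨fun _ _ h => Sym2.eq_swap ▸ h⟩
  Std.Symm.symm _ _ h

/-- The connected component of `v` in the subgraph of `t` with edge set `F`. -/
noncomputable def Tube.component (t : Tube E) {F : Finset (Sym2 V)} (hF : F ⊆ t.edges) {v : V}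
    (hv : v ∈ t.verts) : Tube E := by
  classical
  exact
  { verts := t.verts.filter (Relation.ReflTransGen (fun a b => s(a, b) ∈ F) v)
    edges := F.filter (fun e => ∀ x ∈ e, Relation.ReflTransGen (fun a b => s(a, b) ∈ F) v x)
    nonempty := ⟨v, Finset.mem_filter.2 ⟨hv, .refl⟩⟩
    edges_sub := fun e he => t.edges_sub (hF (Finset.mem_filter.1 he).1)
    endpoints_mem := fun e he x hx => Finset.mem_filter.2
      ⟨t.endpoints_mem e (hF (Finset.mem_filter.1 he).1) x hx, (Finset.mem_filter.1 he).2 x hx⟩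
    conn := by
      have from_v : ∀ x, Relation.ReflTransGen (fun a b => s(a, b) ∈ F) v x →
          Relation.ReflTransGen (fun a b => s(a, b) ∈ F.filter
            (fun e => ∀ x ∈ e, Relation.ReflTransGen (fun a b => s(a, b) ∈ F) v x)) v x := by
        intro x h
        induction h with
        | refl => exact .refl
        | @tail y z hy hyz ih =>
          refine ih.tail (Finset.mem_filter.2 ⟨hyz, fun x hx => ?_⟩)
          rcases Sym2.mem_iff.1 hx with rfl | rfl
          exacts [hy, hy.tail hyz]
      intro u hu w hw
      exact (reflTransGen_mem_sym2_symm (from_v u (Finset.mem_filter.1 hu).2)).trans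
        (from_v w (Finset.mem_filter.1 hw).2) }

section component

variable (t : Tube E) {F : Finset (Sym2 V)} (hF : F ⊆ t.edges) {v : V} (hv : v ∈ t.verts)

theorem Tube.mem_component_verts {x : V} :
    x ∈ (t.component hF hv).verts ↔ Relation.ReflTransGen (fun a b => s(a, b) ∈ F) v x := by
  classical
  simp only [Tube.component, Finset.mem_filter, and_iff_right_iff_imp]
  exact t.mem_verts_of_reflTransGen hF hv

theorem Tube.component_verts_subset : (t.component hF hv).verts ⊆ t.verts := by
  classical
  exact Finset.filter_subset _ _

theorem Tube.component_edges_subset : (t.component hF hv).edges ⊆ F := by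
  classical
  exact Finset.filter_subset _ _

theorem Tube.mem_component_edges {e : Sym2 V} (he : e ∈ F) {x : V} (hxe : x ∈ e)
    (hx : x ∈ (t.component hF hv).verts) : e ∈ (t.component hF hv).edges := by
  classical
  rw [Tube.mem_component_verts] at hx
  obtain ⟨y, rfl⟩ := Sym2.mem_iff_exists.1 hxe
  refine Finset.mem_filter.2 ⟨he, fun z hz => ?_⟩
  rcases Sym2.mem_iff.1 hz with rfl | rfl
  exacts [hx, hx.tail he]

theorem Tube.edges_subset_component_edges {τ : Tube E} (hτ : τ.edges ⊆ F) {x : V}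
    (hxτ : x ∈ τ.verts) (hx : x ∈ (t.component hF hv).verts) :
    τ.edges ⊆ (t.component hF hv).edges := by
  intro e he
  obtain ⟨y, hy⟩ : ∃ y, y ∈ e := ⟨_, e.out_fst_mem⟩
  refine t.mem_component_edges hF hv (hτ he) hy ?_
  rw [Tube.mem_component_verts] at hx ⊢
  exact hx.trans (Relation.ReflTransGen.mono (fun a b hab => hτ hab) _ _
    (τ.conn x hxτ y (τ.endpoints_mem e he y hy)))

end component

def Tube.Compatible (a b : Tube E) : Prop :=
  Disjoint a.verts b.verts ∨ a.edges ⊆ b.edges ∨ b.edges ⊆ a.edges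

theorem Tube.compatible_refl (a : Tube E) : a.Compatible a :=
  Or.inr (Or.inl subset_rfl)

theorem Tube.Compatible.symm {a b : Tube E} (h : a.Compatible b) : b.Compatible a := by
  rcases h with h | h | h
  exacts [Or.inl h.symm, Or.inr (Or.inr h), Or.inr (Or.inl h)]

theorem Tube.Compatible.edges_subset_or_of_mem {a b : Tube E} (h : a.Compatible b) {v : V}
    (ha : v ∈ a.verts) (hb : v ∈ b.verts) : a.edges ⊆ b.edges ∨ b.edges ⊆ a.edges :=
  h.resolve_left (Finset.not_disjoint_iff.2 ⟨v, ha, hb⟩)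

theorem IsTubing.compatible {T : Finset (Tube E)} (hT : IsTubing E T) {a b : Tube E}
    (ha : a ∈ T) (hb : b ∈ T) : a.Compatible b :=
  hT a ha b hb

theorem IsMaxTubing.mem_of_forall_compatible {T : Finset (Tube E)} (hT : IsMaxTubing E T)
    {c : Tube E} (hc : ∀ τ ∈ T, c.Compatible τ) : c ∈ T := by
  classical
  have hins : IsTubing E (insert c T) := by
    intro t₁ h₁ t₂ h₂
    rcases Finset.mem_insert.1 h₁ with rfl | h₁ <;> rcases Finset.mem_insert.1 h₂ with h₂ | h₂
    · exact h₂ ▸ t₁.compatible_refl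
    · exact hc t₂ h₂
    · exact h₂ ▸ (hc t₁ h₁).symm
    · exact hT.1 t₁ h₁ t₂ h₂
  rw [← hT.2 _ hins (Finset.subset_insert c T)]
  exact Finset.mem_insert_self c T

/-- The paper's condition `e ∈ E(τ) ↔ t ⊆ τ`, with `t ⊆ τ` read as `E(t) ⊆ E(τ)`; the two agree
once `t` has an edge, by `Tube.verts_subset_of_edges_subset`. -/
def Tube.Introduces (T : Finset (Tube E)) (t : Tube E) (e : Sym2 V) : Prop :=
  e ∈ t.edges ∧ ∀ τ ∈ T, e ∈ τ.edges → t.edges ⊆ τ.edges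

theorem IsTubing.exists_introduces {T : Finset (Tube E)} (hT : IsTubing E T) {t : Tube E}
    (ht : t ∈ T) (hne : t.edges.Nonempty) : ∃ e, t.Introduces T e := by
  classical
  by_contra! hnone
  have below : ∀ e ∈ t.edges, ∃ τ ∈ T, e ∈ τ.edges ∧ τ.edges ⊂ t.edges := by
    intro e he
    obtain ⟨τ, hτ, heτ, htτ⟩ : ∃ τ ∈ T, e ∈ τ.edges ∧ ¬ t.edges ⊆ τ.edges := by
      simpa [Tube.Introduces, he] using hnone e
    obtain ⟨x, hx⟩ : ∃ x, x ∈ e := ⟨_, e.out_fst_mem⟩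
    rcases (hT.compatible ht hτ).edges_subset_or_of_mem (t.endpoints_mem e he x hx)
      (τ.endpoints_mem e heτ x hx) with h | h
    · exact absurd h htτ
    · exact ⟨τ, hτ, heτ, Finset.ssubset_iff_subset_ne.2 ⟨h, fun h' => htτ h'.ge⟩⟩
  set S := T.filter (fun τ => τ.edges.Nonempty ∧ τ.edges ⊂ t.edges)
  have mem_S : ∀ τ ∈ T, ∀ e ∈ τ.edges, τ.edges ⊂ t.edges → τ ∈ S := fun τ hτ e he hτt =>
    Finset.mem_filter.2 ⟨hτ, ⟨e, he⟩, hτt⟩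
  obtain ⟨e₀, he₀⟩ := hne
  obtain ⟨τ₀, hτ₀, he₀τ₀, hτ₀t⟩ := below e₀ he₀
  obtain ⟨c, hcS, hcmax⟩ :=
    S.exists_max_image (fun τ => τ.edges.card) ⟨τ₀, mem_S τ₀ hτ₀ e₀ he₀τ₀ hτ₀t⟩
  obtain ⟨hcT, hcne, hct⟩ := Finset.mem_filter.1 hcS
  obtain ⟨e, het, hec, x, hxe, hxc⟩ :=
    Tube.exists_boundary_edge (Tube.verts_subset_of_edges_subset hcne hct.subset) hct
  obtain ⟨τ, hτ, heτ, hτt⟩ := below e het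
  rcases (hT.compatible hcT hτ).edges_subset_or_of_mem hxc (τ.endpoints_mem e heτ x hxe)
    with hcτ | hτc
  · have hlt : c.edges.card < τ.edges.card :=
      Finset.card_lt_card (Finset.ssubset_iff_subset_ne.2 ⟨hcτ, fun h => hec (h ▸ heτ)⟩)
    exact (hcmax τ (mem_S τ hτ e heτ hτt)).not_gt hlt
  · exact hec (hτc heτ)

theorem IsTubing.compatible_component_erase [DecidableEq V] {T : Finset (Tube E)}
    (hT : IsTubing E T) {t : Tube E} (ht : t ∈ T) {e₁ : Sym2 V} (h₁ : t.Introduces T e₁)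
    {v : V} (hv : v ∈ t.verts) {τ : Tube E} (hτ : τ ∈ T) :
    (t.component (t.edges.erase_subset e₁) hv).Compatible τ := by
  set c := t.component (t.edges.erase_subset e₁) hv
  have hct : c.edges ⊆ t.edges :=
    (t.component_edges_subset _ hv).trans (t.edges.erase_subset e₁)
  rcases hT.compatible ht hτ with hd | htτ | hτt
  · exact Or.inl (hd.mono_left (t.component_verts_subset _ hv))
  · exact Or.inr (Or.inl (hct.trans htτ))
  by_cases he₁ : e₁ ∈ τ.edges
  · exact Or.inr (Or.inl (hct.trans (h₁.2 τ hτ he₁)))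
  have hτF : τ.edges ⊆ t.edges.erase e₁ := fun e he =>
    Finset.mem_erase.2 ⟨fun h => he₁ (h ▸ he), hτt he⟩
  rcases Finset.disjoint_or_nonempty_inter c.verts τ.verts with hd | ⟨x, hx⟩
  · exact Or.inl hd
  · rw [Finset.mem_inter] at hx
    exact Or.inr (Or.inr (t.edges_subset_component_edges _ hv hτF hx.2 hx.1))

theorem IsMaxTubing.eq_of_introduces {T : Finset (Tube E)} (hT : IsMaxTubing E T) {t : Tube E}
    (ht : t ∈ T) {e₁ e₂ : Sym2 V} (h₁ : t.Introduces T e₁) (h₂ : t.Introduces T e₂) :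
    e₁ = e₂ := by
  classical
  by_contra hne
  obtain ⟨v, hv⟩ : ∃ v, v ∈ e₂ := ⟨_, e₂.out_fst_mem⟩
  have hvt : v ∈ t.verts := t.endpoints_mem e₂ h₂.1 v hv
  set c := t.component (t.edges.erase_subset e₁) hvt
  have he₂c : e₂ ∈ c.edges :=
    t.mem_component_edges _ hvt (Finset.mem_erase.2 ⟨Ne.symm hne, h₂.1⟩) hv
      ((t.mem_component_verts _ hvt).2 .refl)
  have he₁c : e₁ ∉ c.edges := fun h =>
    (Finset.mem_erase.1 (t.component_edges_subset _ hvt h)).1 rfl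
  have hcT : c ∈ T :=
    hT.mem_of_forall_compatible fun τ hτ => hT.1.compatible_component_erase ht h₁ hvt hτ
  exact he₁c (h₂.2 c hcT he₂c h₁.1)

end

theorem statement7_general (E : Finset (Sym2 V))
    (T : Finset (Tube E)) (hT : IsMaxTubing E T)
    (t : Tube E) (ht : t ∈ T) (hsing : ¬ t.IsSingleton) :
    ∃! e : Sym2 V, e ∈ t.edges ∧ ∀ τ ∈ T, (e ∈ τ.edges ↔ t ≤ τ) := by
  have hne := Tube.edges_nonempty_of_not_isSingleton hsing
  have introduces_iff : ∀ e, (e ∈ t.edges ∧ ∀ τ ∈ T, (e ∈ τ.edges ↔ t ≤ τ)) ↔ t.Introduces T e :=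
    fun e => ⟨fun ⟨he, h⟩ => ⟨he, fun τ hτ heτ => ((h τ hτ).1 heτ).2⟩,
      fun ⟨he, h⟩ => ⟨he, fun τ hτ => ⟨fun heτ =>
        ⟨Tube.verts_subset_of_edges_subset hne (h τ hτ heτ), h τ hτ heτ⟩, fun hle => hle.2 he⟩⟩⟩
  obtain ⟨e, he⟩ := hT.1.exists_introduces ht hne
  exact ⟨e, (introduces_iff e).2 he,
    fun e' he' => hT.eq_of_introduces ht ((introduces_iff e').1 he') he⟩

/-- Let `G` be a finite simple graph, `T` a maximal tubing of `G`, and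
`t ∈ T` a tube that is not a singleton. Then there exists a unique edge `e ∈ E(t)` such
that for every `τ ∈ T` one has `e ∈ E(τ)` if and only if `t ⊆ τ` (`t` introduces `e`). -/
theorem statement7 (E : Finset (Sym2 V)) (hE : ∀ e ∈ E, ¬ e.IsDiag)
    (T : Finset (Tube E)) (hT : IsMaxTubing E T)
    (t : Tube E) (ht : t ∈ T) (hsing : ¬ t.IsSingleton) :
    ∃! e : Sym2 V, e ∈ t.edges ∧ ∀ τ ∈ T, (e ∈ τ.edges ↔ t ≤ τ) :=
  statement7_general E T hT t ht hsing
end
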